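/- Let H = (V_H, E_H) be an undirected multigraph, let N ⊆ E_H, let k ≥ 0 be an integer, let F_1, …, F_m be a maximal spanning forest decomposition (msfd) of order m ≥ k + 1 of H ∖ N, and let H' = (V_H, E') with E' = N ∪ F_1 ∪ … ∪ F_{k+1}. Then for every nonempty proper subset S ⊂ V_H, min(λ(S,H'), k+1) = min(λ(S,H), k+1); in particular, if λ(S,H) ≤ k+1 then λ(S,H') = λ(S,H), and if λ(S,H) > k+1 then λ(S,H') ≥ k+1. -/

import Mathlib

open scoped Classical in
/-- A multigraph on vertex set `V` is modeled by the multiset of its edges,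
each an unordered pair of distinct vertices. `mCut M S` is the size of the edge cut
`E_M(S, V∖S)`: the number of edges of `M` (with multiplicity) with one endpoint in `S`
and the other in `Sᶜ`. -/
noncomputable def mCut {V : Type*} (M : Multiset (Sym2 V)) (S : Set V) : ℕ :=
  Multiset.card (M.filter fun e => ∃ u ∈ S, ∃ v ∈ Sᶜ, e = s(u, v))

/-- The simple graph underlying a multiset of edges. -/
def graphOf {V : Type*} (M : Multiset (Sym2 V)) : SimpleGraph V :=
  SimpleGraph.fromEdgeSet {e | e ∈ M}

/-- A multiset of edges is a forest: no repeated edges, no self-loops, and the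
underlying simple graph is acyclic. -/
def IsMForest {V : Type*} (F : Multiset (Sym2 V)) : Prop :=
  F.Nodup ∧ (∀ e ∈ F, ¬e.IsDiag) ∧ (graphOf F).IsAcyclic

/-- `F` is a maximal spanning forest of the multigraph `R`: a subforest of `R` such that
the endpoints of every edge of `R` lie in the same component of `F`. -/
def IsMaxSpanningForest {V : Type*} (R F : Multiset (Sym2 V)) : Prop :=
  F ≤ R ∧ IsMForest F ∧ ∀ u v : V, s(u, v) ∈ R → (graphOf F).Reachable u v

open scoped Classical in
/-- `F 1, …, F m` is a maximal spanning forest decomposition of order `m` of the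
multigraph `M`: the forests decompose `M` (so they are edge-disjoint as sub-multisets
and their union is `M`) and each `F i` is a maximal spanning forest of
`M ∖ (F 1 ∪ … ∪ F (i-1))`. -/
noncomputable def IsMSFD {V : Type*} (M : Multiset (Sym2 V)) (m : ℕ)
    (F : ℕ → Multiset (Sym2 V)) : Prop :=
  (∑ i ∈ Finset.Icc 1 m, F i) = M ∧
  ∀ i ∈ Finset.Icc 1 m, IsMaxSpanningForest (M - ∑ j ∈ Finset.Icc 1 (i - 1), F j) (F i)

/-- The edge connectivity of the multigraph `M`: the minimum of `λ(S,M)` over all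
nonempty proper subsets `S ⊂ V`. -/
noncomputable def mEdgeConn {V : Type*} (M : Multiset (Sym2 V)) : ℕ :=
  sInf {c : ℕ | ∃ S : Set V, S.Nonempty ∧ Sᶜ.Nonempty ∧ mCut M S = c}


/-!
If the `i`-th forest of the decomposition has no edge across `S`, then by maximality no edge
of the remaining multigraph `F i ∪ F (i+1) ∪ …` crosses `S`. So the cut sizes of `F 1, F 2, …`
are positive up to some index and zero from then on: either `F 1, …, F (k+1)` each contribute
at least one edge to the cut, or the forests after `F (k+1)` contribute none.
-/

open Finset

lemma sum_Icc_one_add_sum_Icc {M : Type*} [AddCommMonoid M] (f : ℕ → M) {i m : ℕ}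
    (hi : i ≤ m) : ∑ j ∈ Icc 1 i, f j + ∑ j ∈ Icc (i + 1) m, f j = ∑ j ∈ Icc 1 m, f j := by
  simpa only [← Icc_add_one_left_eq_Ioc, zero_add] using sum_Ioc_consecutive f (Nat.zero_le i) hi

lemma min_sum_Icc_eq_of_zero_persists (c : ℕ → ℕ) {K m : ℕ} (hKm : K ≤ m)
    (hc : ∀ i j, 1 ≤ i → i ≤ j → j ≤ m → c i = 0 → c j = 0) :
    min (∑ i ∈ Icc 1 K, c i) K = min (∑ i ∈ Icc 1 m, c i) K := by
  rw [← sum_Icc_one_add_sum_Icc c hKm]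
  by_cases hpos : ∀ i ∈ Icc 1 K, 1 ≤ c i
  · have hK : K ≤ ∑ i ∈ Icc 1 K, c i := by
      simpa using card_nsmul_le_sum (Icc 1 K) c 1 hpos
    omega
  · push Not at hpos
    obtain ⟨i, hi, hci⟩ := hpos
    rw [mem_Icc] at hi
    have htail : ∑ j ∈ Icc (K + 1) m, c j = 0 := sum_eq_zero fun j hj => by
      rw [mem_Icc] at hj
      exact hc i j hi.1 (by omega) hj.2 (by omega)
    rw [htail, add_zero]

section

open scoped Classical

variable {V : Type*}

lemma mCut_add (A B : Multiset (Sym2 V)) (S : Set V) :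
    mCut (A + B) S = mCut A S + mCut B S := by
  simp [mCut, Multiset.filter_add]

lemma mCut_mono {A B : Multiset (Sym2 V)} (h : A ≤ B) (S : Set V) : mCut A S ≤ mCut B S :=
  Multiset.card_le_card (Multiset.filter_le_filter _ h)

lemma mCut_sum {ι : Type*} (s : Finset ι) (f : ι → Multiset (Sym2 V)) (S : Set V) :
    mCut (∑ i ∈ s, f i) S = ∑ i ∈ s, mCut (f i) S :=
  map_sum (⟨⟨fun A => mCut A S, by simp [mCut]⟩, fun A B => mCut_add A B S⟩ :
    Multiset (Sym2 V) →+ ℕ) f s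

/-- A path joining the two endpoints of a crossing edge has a crossing edge itself. -/
lemma IsMaxSpanningForest.mCut_eq_zero {R F : Multiset (Sym2 V)} {S : Set V}
    (h : IsMaxSpanningForest R F) (hF : mCut F S = 0) : mCut R S = 0 := by
  rw [mCut, Multiset.card_eq_zero, Multiset.filter_eq_nil] at hF ⊢
  rintro e he ⟨u, hu, v, hv, rfl⟩
  obtain ⟨p⟩ := h.2.2 u v he
  obtain ⟨d, -, hd₁, hd₂⟩ := p.exists_boundary_dart S hu hv
  have hd : s(d.fst, d.snd) ∈ F := d.adj.1
  exact hF _ hd ⟨d.fst, hd₁, d.snd, hd₂, rfl⟩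

lemma IsMSFD.le_residual {M : Multiset (Sym2 V)} {m : ℕ}
    {F : ℕ → Multiset (Sym2 V)} (hF : IsMSFD M m F) {i j : ℕ} (hi : 1 ≤ i) (hij : i ≤ j)
    (hjm : j ≤ m) :
    F j ≤ M - ∑ l ∈ Icc 1 (i - 1), F l := by
  have hresidual : M - ∑ l ∈ Icc 1 (i - 1), F l = ∑ l ∈ Icc (i - 1 + 1) m, F l := by
    rw [← hF.1, ← sum_Icc_one_add_sum_Icc F (by omega : i - 1 ≤ m), add_tsub_cancel_left]
  rw [hresidual]
  exact single_le_sum (f := F) (fun _ _ => zero_le) (mem_Icc.mpr ⟨by omega, hjm⟩)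

lemma IsMSFD.mCut_eq_zero_of_le {M : Multiset (Sym2 V)} {m : ℕ}
    {F : ℕ → Multiset (Sym2 V)} (hF : IsMSFD M m F) {S : Set V} {i j : ℕ} (hi : 1 ≤ i)
    (hij : i ≤ j) (hjm : j ≤ m) (hFi : mCut (F i) S = 0) : mCut (F j) S = 0 := by
  have hR : mCut (M - ∑ l ∈ Icc 1 (i - 1), F l) S = 0 :=
    (hF.2 i (mem_Icc.mpr ⟨hi, hij.trans hjm⟩)).mCut_eq_zero hFi
  exact Nat.eq_zero_of_le_zero (hR ▸ mCut_mono (hF.le_residual hi hij hjm) S)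

end

open scoped Classical in
theorem msfd_cut_min_eq_general {V : Type*} (H : Multiset (Sym2 V))
    (N : Multiset (Sym2 V)) (hN : N ≤ H)
    (k m : ℕ) (hm : k + 1 ≤ m) (F : ℕ → Multiset (Sym2 V))
    (hF : IsMSFD (H - N) m F) :
    ∀ S : Set V, S.Nonempty → Sᶜ.Nonempty →
      min (mCut (N + ∑ i ∈ Finset.Icc 1 (k + 1), F i) S) (k + 1) = min (mCut H S) (k + 1) ∧
      (mCut H S ≤ k + 1 → mCut (N + ∑ i ∈ Finset.Icc 1 (k + 1), F i) S = mCut H S) ∧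
      (k + 1 < mCut H S → k + 1 ≤ mCut (N + ∑ i ∈ Finset.Icc 1 (k + 1), F i) S) := by
  intro S _ _
  have hcutH : mCut H S = mCut N S + ∑ i ∈ Icc 1 m, mCut (F i) S := by
    rw [← add_tsub_cancel_of_le hN, mCut_add, ← hF.1, mCut_sum]
  have hcutH' : mCut (N + ∑ i ∈ Icc 1 (k + 1), F i) S
      = mCut N S + ∑ i ∈ Icc 1 (k + 1), mCut (F i) S := by
    rw [mCut_add, mCut_sum]
  have hmin := min_sum_Icc_eq_of_zero_persists (fun i => mCut (F i) S) hm
    fun _ _ hi hij hjm => hF.mCut_eq_zero_of_le hi hij hjm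
  have hle : ∑ i ∈ Icc 1 (k + 1), mCut (F i) S ≤ ∑ i ∈ Icc 1 m, mCut (F i) S :=
    sum_le_sum_of_subset (Icc_subset_Icc_right hm)
  refine ⟨?_, ?_, ?_⟩ <;> omega

open scoped Classical in
/-- Let `H` be a multigraph, `N ⊆ E_H`, `k ≥ 0`, let `F 1, …, F m` be an msfd of order
`m ≥ k + 1` of `H ∖ N`, and let `H' = N ∪ F 1 ∪ … ∪ F (k+1)`. Then for every nonempty
proper subset `S`, `min(λ(S,H'), k+1) = min(λ(S,H), k+1)`; in particular, if
`λ(S,H) ≤ k+1` then `λ(S,H') = λ(S,H)`, and if `λ(S,H) > k+1` then `λ(S,H') ≥ k+1`. -/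
theorem msfd_cut_min_eq {V : Type*} [Fintype V] (H : Multiset (Sym2 V))
    (hH : ∀ e ∈ H, ¬e.IsDiag) (N : Multiset (Sym2 V)) (hN : N ≤ H)
    (k m : ℕ) (hm : k + 1 ≤ m) (F : ℕ → Multiset (Sym2 V))
    (hF : IsMSFD (H - N) m F) :
    ∀ S : Set V, S.Nonempty → Sᶜ.Nonempty →
      min (mCut (N + ∑ i ∈ Finset.Icc 1 (k + 1), F i) S) (k + 1) = min (mCut H S) (k + 1) ∧
      (mCut H S ≤ k + 1 → mCut (N + ∑ i ∈ Finset.Icc 1 (k + 1), F i) S = mCut H S) ∧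
      (k + 1 < mCut H S → k + 1 ≤ mCut (N + ∑ i ∈ Finset.Icc 1 (k + 1), F i) S) :=
  msfd_cut_min_eq_general H N hN k m hm F hF
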